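/- arXiv:2103.11674 — 2 statements merged into one kernel-verified Lean document; each statement's English description precedes it below -/
import Mathlib

section
/- The association probability to the THz tier equals A_T = ∫_0^{R_T} f_{x_T}(x) exp(−πλ_m (ε x^{α_T} e^{k x})^{2/α_m}) dx, where f_{x_T}(x) = 2πλ_T x e^{−πλ_T x²}/(1 − e^{−πλ_T R_T²}), assuming the nearest MBS distance x_m satisfies P(x_m ≥ ρ) = e^{−πλ_m ρ²} and is independent of x_T. -/
/-! By independence the joint law of `(XT, Xm)` is a product measure, so by Fubini the
probability of `g(XT) < Xm`, with `g(x) = (ε x^{α_T} e^{k x})^{1/α_m}`, is the average over the law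
of `XT` of the tail `P(Xm > g(x)) = e^{−π λ_m g(x)²}`. The open tail agrees with the given
closed one because the latter is continuous. Integrating against the density of `XT` gives the
formula, since `g(x)² = (ε x^{α_T} e^{k x})^{2/α_m}`. -/

open MeasureTheory ProbabilityTheory Real Set

open Filter Topology

section

variable {Ω : Type*} [MeasurableSpace Ω] {μ : Measure Ω}

theorem measure_lt_eq_ofReal_of_measure_le_eq {Y : Ω → ℝ} {T : ℝ → ℝ} {ρ : ℝ}
    (hT : ContinuousWithinAt T (Ioi ρ) ρ)
    (hY : ∀ t, ρ < t → μ {ω | t ≤ Y ω} = ENNReal.ofReal (T t)) :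
    μ {ω | ρ < Y ω} = ENNReal.ofReal (T ρ) := by
  obtain ⟨u, hu_anti, hu_gt, hu_lim⟩ := exists_seq_strictAnti_tendsto ρ
  have hunion : ⋃ n, {ω | u n ≤ Y ω} = {ω | ρ < Y ω} := by
    change ⋃ n, Y ⁻¹' Ici (u n) = Y ⁻¹' Ioi ρ
    rw [← preimage_iUnion, iUnion_Ici_eq_Ioi_of_lt_of_tendsto hu_gt hu_lim]
  have hmono : Monotone fun n => {ω | u n ≤ Y ω} :=
    fun m n hmn ω hω => (hu_anti.antitone hmn).trans hω
  have hlim := tendsto_measure_iUnion_atTop (μ := μ) hmono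
  rw [hunion] at hlim
  refine tendsto_nhds_unique hlim ?_
  rw [show (μ ∘ fun n => {ω | u n ≤ Y ω}) = fun n => ENNReal.ofReal (T (u n)) from
    funext fun n => hY _ (hu_gt n)]
  have hu_lim' : Tendsto u atTop (𝓝[>] ρ) :=
    tendsto_nhdsWithin_iff.2 ⟨hu_lim, Eventually.of_forall hu_gt⟩
  exact ENNReal.tendsto_ofReal (hT.tendsto.comp hu_lim')

variable {α : Type*} [MeasurableSpace α]

theorem measure_comp_lt_eq_lintegral [IsFiniteMeasure μ] {X : Ω → α} {Y : Ω → ℝ}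
    (hX : Measurable X) (hY : Measurable Y) (hXY : IndepFun X Y μ) {g : α → ℝ}
    (hg : Measurable g) :
    μ {ω | g (X ω) < Y ω} = ∫⁻ x, μ {ω | g x < Y ω} ∂(μ.map X) := by
  have hE : MeasurableSet {p : α × ℝ | g p.1 < p.2} :=
    measurableSet_lt (hg.comp measurable_fst) measurable_snd
  have hjoint := (indepFun_iff_map_prod_eq_prod_map_map hX.aemeasurable hY.aemeasurable).1 hXY
  calc μ {ω | g (X ω) < Y ω}
      = μ.map (fun ω => (X ω, Y ω)) {p : α × ℝ | g p.1 < p.2} :=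
        (Measure.map_apply (hX.prodMk hY) hE).symm
    _ = ∫⁻ x, μ.map Y (Ioi (g x)) ∂(μ.map X) := by
        rw [hjoint, Measure.prod_apply hE]
        rfl
    _ = ∫⁻ x, μ {ω | g x < Y ω} ∂(μ.map X) := by
        simp_rw [Measure.map_apply hY measurableSet_Ioi]
        rfl

theorem toReal_measure_comp_lt_eq_setIntegral [IsFiniteMeasure μ] {X Y : Ω → ℝ}
    (hX : Measurable X) (hY : Measurable Y) (hXY : IndepFun X Y μ) {S : Set ℝ}
    (hS : MeasurableSet S) {f : ℝ → ℝ} (hf : Measurable f) (hf_nonneg : ∀ x ∈ S, 0 ≤ f x)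
    (hlaw : μ.map X = volume.withDensity (S.indicator fun x => ENNReal.ofReal (f x)))
    {g : ℝ → ℝ} (hg : Measurable g) :
    (μ {ω | g (X ω) < Y ω}).toReal = ∫ x in S, f x * (μ {ω | g x < Y ω}).toReal := by
  have htail_anti : Antitone fun t => μ {ω | t < Y ω} :=
    fun s t hst => measure_mono fun ω (hω : t < Y ω) => hst.trans_lt hω
  have htail_meas : Measurable fun x => μ {ω | g x < Y ω} := htail_anti.measurable.comp hg
  rw [measure_comp_lt_eq_lintegral hX hY hXY hg, hlaw, withDensity_indicator hS,
    lintegral_withDensity_eq_lintegral_mul _ hf.ennreal_ofReal htail_meas,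
    ← integral_toReal (hf.ennreal_ofReal.mul htail_meas).aemeasurable
      (Eventually.of_forall fun x => ENNReal.mul_lt_top ENNReal.ofReal_lt_top
        (measure_lt_top μ _))]
  refine setIntegral_congr_fun hS fun x hx => ?_
  simp only [Pi.mul_apply, ENNReal.toReal_mul, ENNReal.toReal_ofReal (hf_nonneg x hx)]

end

theorem stmt10_general (lamT lamm RT ε k αT αm : ℝ)
    (hlamT : 0 < lamT) (hRT : 0 < RT) (hε : 0 < ε)
    (Ω : Type*) [MeasureSpace Ω] [IsProbabilityMeasure (ℙ : Measure Ω)]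
    (XT Xm : Ω → ℝ) (hXT : Measurable XT) (hXm : Measurable Xm)
    (hindep : IndepFun XT Xm)
    (hXTlaw : Measure.map XT ℙ = (volume : Measure ℝ).withDensity
      (Set.indicator (Set.Ioo 0 RT) (fun x =>
        ENNReal.ofReal (2 * π * lamT * x * Real.exp (-(π * lamT * x ^ 2)) /
          (1 - Real.exp (-(π * lamT * RT ^ 2)))))))
    (hXmtail : ∀ ρ : ℝ, 0 ≤ ρ → ℙ {ω | ρ ≤ Xm ω} = ENNReal.ofReal (Real.exp (-(π * lamm * ρ ^ 2)))) :
    (ℙ {ω | (ε * XT ω ^ αT * Real.exp (k * XT ω)) ^ (1 / αm) < Xm ω}).toReal =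
      ∫ x in Set.Ioo 0 RT,
        (2 * π * lamT * x * Real.exp (-(π * lamT * x ^ 2)) /
          (1 - Real.exp (-(π * lamT * RT ^ 2)))) *
        Real.exp (-(π * lamm * (ε * x ^ αT * Real.exp (k * x)) ^ (2 / αm))) := by
  have hdensity_nonneg : ∀ x ∈ Ioo 0 RT,
      0 ≤ 2 * π * lamT * x * Real.exp (-(π * lamT * x ^ 2)) /
        (1 - Real.exp (-(π * lamT * RT ^ 2))) := fun x hx => by
    have hmass : Real.exp (-(π * lamT * RT ^ 2)) < 1 :=
      Real.exp_lt_one_iff.2 (neg_neg_iff_pos.2 (by positivity))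
    have hx_pos : 0 < x := hx.1
    exact div_nonneg (by positivity) (sub_nonneg.2 hmass.le)
  have hMBS_tail : ∀ ρ : ℝ, 0 ≤ ρ →
      (ℙ {ω | ρ < Xm ω}).toReal = Real.exp (-(π * lamm * ρ ^ 2)) := fun ρ hρ => by
    rw [measure_lt_eq_ofReal_of_measure_le_eq (by fun_prop)
      (fun t ht => hXmtail t (hρ.trans ht.le)), ENNReal.toReal_ofReal (Real.exp_pos _).le]
  rw [toReal_measure_comp_lt_eq_setIntegral hXT hXm hindep measurableSet_Ioo (by fun_prop)
    hdensity_nonneg hXTlaw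
    (g := fun x => (ε * x ^ αT * Real.exp (k * x)) ^ (1 / αm)) (by fun_prop)]
  refine setIntegral_congr_fun measurableSet_Ioo fun x hx => ?_
  have hpower_nonneg : 0 ≤ ε * x ^ αT * Real.exp (k * x) := by
    have hx_pos : 0 < x := hx.1
    positivity
  simp only [hMBS_tail _ (Real.rpow_nonneg hpower_nonneg _), ← Real.rpow_mul_natCast hpower_nonneg]
  norm_num [div_eq_mul_inv, mul_comm]

/-- Association probability to the THz tier: if the (conditioned) nearest-TBS distance
`XT` has density `f_{x_T}(x) = 2π λ_T x e^{−π λ_T x²} / (1 − e^{−π λ_T R_T²})` on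
`(0, R_T)`, the nearest-MBS distance `Xm` satisfies `P(Xm ≥ ρ) = e^{−π λ_m ρ²}` and is
independent of `XT`, then the probability that the user associates with the THz tier
(i.e. that `Xm` exceeds `(ε x^{α_T} e^{k x})^{1/α_m}` at `x = XT`) equals
`∫_0^{R_T} f_{x_T}(x) exp(−π λ_m (ε x^{α_T} e^{k x})^{2/α_m}) dx`. -/
theorem stmt10 (lamT lamm RT ε k αT αm : ℝ)
    (hlamT : 0 < lamT) (hlamm : 0 < lamm) (hRT : 0 < RT) (hε : 0 < ε)
    (hk : 0 < k) (hαT : 0 < αT) (hαm : 0 < αm)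
    (Ω : Type*) [MeasureSpace Ω] [IsProbabilityMeasure (ℙ : Measure Ω)]
    (XT Xm : Ω → ℝ) (hXT : Measurable XT) (hXm : Measurable Xm)
    (hindep : IndepFun XT Xm)
    (hXTlaw : Measure.map XT ℙ = (volume : Measure ℝ).withDensity
      (Set.indicator (Set.Ioo 0 RT) (fun x =>
        ENNReal.ofReal (2 * π * lamT * x * Real.exp (-(π * lamT * x ^ 2)) /
          (1 - Real.exp (-(π * lamT * RT ^ 2)))))))
    (hXmtail : ∀ ρ : ℝ, 0 ≤ ρ → ℙ {ω | ρ ≤ Xm ω} = ENNReal.ofReal (Real.exp (-(π * lamm * ρ ^ 2)))) :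
    (ℙ {ω | (ε * XT ω ^ αT * Real.exp (k * XT ω)) ^ (1 / αm) < Xm ω}).toReal =
      ∫ x in Set.Ioo 0 RT,
        (2 * π * lamT * x * Real.exp (-(π * lamT * x ^ 2)) /
          (1 - Real.exp (-(π * lamT * RT ^ 2)))) *
        Real.exp (-(π * lamm * (ε * x ^ αT * Real.exp (k * x)) ^ (2 / αm))) :=
  stmt10_general lamT lamm RT ε k αT αm hlamT hRT hε Ω XT Xm hXT hXm hindep hXTlaw hXmtail
end

section
/- Conditioned on association with the mmWave tier, the serving-distance density is f_{X_m}(x̂) = (1/A_m) f_{x_m}(x̂) e^{−πλ_T ν(x̂)²}, where ν(x̂) = (α_T/k)·W((k/α_T)(x̂^{α_m}/ε)^{1/α_T}) and A_m = 1 − A_T. -/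
/-!
Write `g(t) = (ε t^{α_T} e^{k t})^{1/α_m}`, so that the user is served by the mmWave tier iff
`X_m ≤ g(X_T)`. The map `g` is strictly increasing on `[0, ∞)`, and the Lambert function inverts it:
`g(ν(x)) = x`. Hence, for `x > 0`, `x ≤ g(X_T)` iff `X_T ≥ ν(x)`, an event of probability
`e^{-π λ_T ν(x)²}` since `X_T > 0` almost surely and its tail is continuous. By independence and
Fubini, `P(X_m ≤ g(X_T), X_m ≤ x̂) = ∫_0^{x̂} f_{x_m}(x) e^{-π λ_T ν(x)²} dx`; dividing by
`P(X_m ≤ g(X_T)) = 1 - A_T = A_m` gives the conditional distribution.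
-/

open MeasureTheory ProbabilityTheory Real Set Filter Topology
open scoped ENNReal

section Lambert

variable {W : ℝ → ℝ} (hW : ∀ u : ℝ, 0 ≤ u → 0 ≤ W u ∧ W u * exp (W u) = u)
include hW

theorem lambertW_pos {u : ℝ} (hu : 0 < u) : 0 < W u := by
  obtain ⟨hw, hwu⟩ := hW u hu.le
  refine hw.lt_of_ne fun h => ?_
  rw [← h, zero_mul] at hwu
  exact hu.ne hwu

theorem mul_rpow_mul_exp_lambertW {ε k α y : ℝ} (hε : 0 < ε) (hk : 0 < k) (hα : 0 < α)
    (hy : 0 ≤ y) :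
    ε * (α / k * W (k / α * (y / ε) ^ (1 / α))) ^ α *
      exp (k * (α / k * W (k / α * (y / ε) ^ (1 / α)))) = y := by
  set u := k / α * (y / ε) ^ (1 / α)
  obtain ⟨hw, hwu⟩ := hW u (by positivity)
  have hexp : exp (k * (α / k * W u)) = exp (W u) ^ α := by
    rw [← exp_mul]; congr 1; field_simp
  calc ε * (α / k * W u) ^ α * exp (k * (α / k * W u))
      = ε * (α / k * (W u * exp (W u))) ^ α := by
        rw [hexp, mul_assoc, ← mul_rpow (by positivity) (exp_pos _).le, mul_assoc]
    _ = ε * ((y / ε) ^ (1 / α)) ^ α := by rw [hwu]; congr 2; simp only [u]; field_simp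
    _ = y := by rw [← rpow_mul (by positivity), one_div_mul_cancel hα.ne', rpow_one]; field_simp

end Lambert

/-- `mmWaveCutoff ε k αT αm t` is the largest mmWave distance at which a user whose nearest THz
base station is at distance `t` still associates with the mmWave tier. -/
noncomputable def mmWaveCutoff (ε k αT αm t : ℝ) : ℝ := (ε * t ^ αT * exp (k * t)) ^ (1 / αm)

/-- The paper's `ν`. -/
noncomputable def lambertThreshold (W : ℝ → ℝ) (ε k αT αm x : ℝ) : ℝ :=
  αT / k * W (k / αT * (x ^ αm / ε) ^ (1 / αT))

section Cutoff

variable {W : ℝ → ℝ} {ε k αT αm : ℝ}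

theorem measurable_mmWaveCutoff : Measurable (mmWaveCutoff ε k αT αm) := by
  unfold mmWaveCutoff; fun_prop

theorem mmWaveCutoff_strictMonoOn (hε : 0 < ε) (hk : 0 ≤ k) (hαT : 0 < αT) (hαm : 0 < αm) :
    StrictMonoOn (mmWaveCutoff ε k αT αm) (Ici 0) := by
  intro a ha b hb hab
  have ha : 0 ≤ a := ha
  have hb : 0 ≤ b := hb
  refine rpow_lt_rpow (by positivity) ?_ (by positivity)
  calc ε * a ^ αT * exp (k * a) < ε * b ^ αT * exp (k * a) := by gcongr
    _ ≤ ε * b ^ αT * exp (k * b) := by gcongr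

variable (hW : ∀ u : ℝ, 0 ≤ u → 0 ≤ W u ∧ W u * exp (W u) = u)
  (hε : 0 < ε) (hk : 0 < k) (hαT : 0 < αT)
include hW hε hk hαT

theorem lambertThreshold_pos {x : ℝ} (hx : 0 < x) : 0 < lambertThreshold W ε k αT αm x :=
  mul_pos (div_pos hαT hk) (lambertW_pos hW (by positivity))

variable (hαm : 0 < αm)
include hαm

theorem mmWaveCutoff_lambertThreshold {x : ℝ} (hx : 0 ≤ x) :
    mmWaveCutoff ε k αT αm (lambertThreshold W ε k αT αm x) = x := by
  rw [mmWaveCutoff, lambertThreshold,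
    mul_rpow_mul_exp_lambertW hW hε hk hαT (rpow_nonneg hx αm), ← rpow_mul hx,
    mul_one_div_cancel hαm.ne', rpow_one]

theorem monotoneOn_lambertThreshold : MonotoneOn (lambertThreshold W ε k αT αm) (Ioi 0) :=
  Function.monotoneOn_of_rightInvOn_of_mapsTo
    (mmWaveCutoff_strictMonoOn hε hk.le hαT hαm).monotoneOn
    (fun _ hx => mmWaveCutoff_lambertThreshold hW hε hk hαT hαm (le_of_lt hx))
    (fun _ hx => (lambertThreshold_pos hW hε hk hαT hx).le)

end Cutoff

theorem tendsto_measure_Ioi_nhdsLT (μ : Measure ℝ) [IsFiniteMeasure μ] (ρ : ℝ) :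
    Tendsto (fun s => μ (Ioi s)) (𝓝[<] ρ) (𝓝 (μ (Ici ρ))) := by
  have hI : ⋂ r > (0 : ℝ), Ioi (ρ - r) = Ici ρ := by
    ext t
    simp only [mem_iInter, mem_Ioi, mem_Ici]
    exact ⟨fun h => le_of_forall_pos_lt_add fun r hr => by linarith [h r hr],
      fun h r hr => by linarith⟩
  have hgt := tendsto_measure_biInter_gt (μ := μ) (s := fun r => Ioi (ρ - r)) (a := 0)
    (fun _ _ => measurableSet_Ioi.nullMeasurableSet)
    (fun _ _ _ hij => Ioi_subset_Ioi (by linarith)) ⟨1, one_pos, measure_ne_top _ _⟩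
  rw [hI] at hgt
  have hsub : Tendsto (fun s => ρ - s) (𝓝[<] ρ) (𝓝[>] 0) :=
    tendsto_nhdsWithin_of_tendsto_nhds_of_eventually_within _
      ((continuous_sub_left ρ).tendsto' ρ 0 (sub_self ρ) |>.mono_left nhdsWithin_le_nhds)
      (eventually_nhdsWithin_of_forall fun s hs => mem_Ioi.2 (sub_pos.2 hs))
  simpa [Function.comp_def] using hgt.comp hsub

theorem measure_Ici_eq_of_measure_Ioi {μ : Measure ℝ} [IsFiniteMeasure μ] {F : ℝ → ℝ} {ρ : ℝ}
    (hF : ContinuousWithinAt F (Iio ρ) ρ)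
    (hμ : ∀ᶠ s in 𝓝[<] ρ, μ (Ioi s) = ENNReal.ofReal (F s)) :
    μ (Ici ρ) = ENNReal.ofReal (F ρ) :=
  tendsto_nhds_unique (tendsto_measure_Ioi_nhdsLT μ ρ)
    (((ENNReal.continuous_ofReal.tendsto _).comp hF).congr' (hμ.mono fun _ hs => hs.symm))

theorem measure_le_comp_eq_measure_Ici {μ : Measure ℝ} (hμ : ∀ᵐ t ∂μ, 0 ≤ t) {g : ℝ → ℝ}
    (hg : StrictMonoOn g (Ici 0)) {s x : ℝ} (hs : 0 ≤ s) (hgs : g s = x) :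
    μ {t | x ≤ g t} = μ (Ici s) := by
  refine measure_congr (eventuallyEq_set.2 ?_)
  filter_upwards [hμ] with t ht
  rw [← hgs]
  exact hg.le_iff_le hs ht

theorem measure_le_comp_eq_exp_of_measure_Ioi {μ : Measure ℝ} [IsProbabilityMeasure μ] {c : ℝ}
    (htail : ∀ ρ, 0 ≤ ρ → μ (Ioi ρ) = ENNReal.ofReal (exp (-(c * ρ ^ 2)))) {g : ℝ → ℝ}
    (hg : StrictMonoOn g (Ici 0)) {s x : ℝ} (hs : 0 < s) (hgs : g s = x) :
    μ {t | x ≤ g t} = ENNReal.ofReal (exp (-(c * s ^ 2))) := by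
  have hμ_pos : ∀ᵐ t ∂μ, 0 < t :=
    (ae_iff_prob_eq_one (measurableSet_Ioi (a := (0 : ℝ))).mem).2
      ((htail 0 le_rfl).trans (by simp))
  rw [measure_le_comp_eq_measure_Ici (hμ_pos.mono fun _ h => h.le) hg hs.le hgs]
  refine measure_Ici_eq_of_measure_Ioi (F := fun ρ => exp (-(c * ρ ^ 2)))
    (Continuous.continuousWithinAt (by fun_prop)) ?_
  filter_upwards [Ioo_mem_nhdsLT hs] with r hr using htail r hr.1.le

theorem setLIntegral_Iic_indicator_Ioo {f h : ℝ → ℝ≥0∞} {a b c : ℝ} (hcb : c < b) :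
    ∫⁻ y in Iic c, (Ioo a b).indicator f y * h y = ∫⁻ y in Ioo a c, f y * h y := by
  have hI : Ioo a b ∩ Iic c = Ioc a c := by
    ext y
    simp only [mem_inter_iff, mem_Ioo, mem_Iic, mem_Ioc]
    constructor
    · rintro ⟨⟨hay, _⟩, hyc⟩; exact ⟨hay, hyc⟩
    · rintro ⟨hay, hyc⟩; exact ⟨⟨hay, hyc.trans_lt hcb⟩, hyc⟩
  simp_rw [← indicator_mul_left]
  rw [setLIntegral_indicator measurableSet_Ioo, hI, setLIntegral_congr Ioo_ae_eq_Ioc.symm]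

section Independent

variable {Ω α β : Type*} {mΩ : MeasurableSpace Ω} [MeasurableSpace α] [MeasurableSpace β]
  {μ : Measure Ω} [IsFiniteMeasure μ] {X : Ω → α}

theorem ProbabilityTheory.IndepFun.measure_mem_eq_lintegral_density {Y : Ω → β}
    (hX : Measurable X) (hY : Measurable Y) (hXY : IndepFun X Y μ) {ν : Measure β} [SFinite ν]
    {d : β → ℝ≥0∞} (hd : Measurable d) (hYlaw : μ.map Y = ν.withDensity d)
    {S : Set (α × β)} (hS : MeasurableSet S) :
    μ {ω | (X ω, Y ω) ∈ S} = ∫⁻ y, d y * μ.map X ((fun t => (t, y)) ⁻¹' S) ∂ν := by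
  have hprod := (indepFun_iff_map_prod_eq_prod_map_map hX.aemeasurable hY.aemeasurable).1 hXY
  change μ ((fun ω => (X ω, Y ω)) ⁻¹' S) = _
  rw [← Measure.map_apply (hX.prodMk hY) hS, hprod, Measure.prod_apply_symm hS, hYlaw,
    lintegral_withDensity_eq_lintegral_mul ν hd (measurable_measure_prodMk_right hS)]
  rfl

theorem ProbabilityTheory.IndepFun.measure_le_comp_inter_le_eq_setLIntegral {Y : Ω → ℝ}
    (hX : Measurable X) (hY : Measurable Y) (hXY : IndepFun X Y μ) {d : ℝ → ℝ≥0∞}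
    (hd : Measurable d) (hYlaw : μ.map Y = volume.withDensity d) {g : α → ℝ}
    (hg : Measurable g) (c : ℝ) :
    μ ({ω | Y ω ≤ g (X ω)} ∩ {ω | Y ω ≤ c}) =
      ∫⁻ y in Iic c, d y * μ.map X {t | y ≤ g t} := by
  have hS : MeasurableSet {p : α × ℝ | p.2 ≤ g p.1 ∧ p.2 ≤ c} :=
    (measurableSet_le measurable_snd (hg.comp measurable_fst)).inter
      (measurableSet_le measurable_snd measurable_const)
  calc μ ({ω | Y ω ≤ g (X ω)} ∩ {ω | Y ω ≤ c})
      = ∫⁻ y, d y * μ.map X ((fun t => (t, y)) ⁻¹' {p : α × ℝ | p.2 ≤ g p.1 ∧ p.2 ≤ c}) :=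
        hXY.measure_mem_eq_lintegral_density hX hY hd hYlaw hS
    _ = ∫⁻ y, (Iic c).indicator (fun y => d y * μ.map X {t | y ≤ g t}) y := by
        refine lintegral_congr fun y => ?_
        by_cases hy : y ≤ c <;> simp [hy, Set.preimage]
    _ = ∫⁻ y in Iic c, d y * μ.map X {t | y ≤ g t} := lintegral_indicator measurableSet_Iic _

end Independent

theorem measure_eq_ofReal_one_sub_compl {Ω : Type*} {_ : MeasurableSpace Ω} {μ : Measure Ω}
    [IsProbabilityMeasure μ] {s : Set Ω} (hs : MeasurableSet s) :
    μ s = ENNReal.ofReal (1 - (μ sᶜ).toReal) := by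
  rw [← measureReal_def, probReal_compl_eq_one_sub hs, sub_sub_cancel, ofReal_measureReal]

theorem cond_eq_ofReal_setIntegral {Ω α : Type*} {_ : MeasurableSpace Ω} [MeasurableSpace α]
    {μ : Measure Ω} [IsFiniteMeasure μ] {ν : Measure α} {E B : Set Ω} (hE : MeasurableSet E)
    {A : ℝ} (hA : 0 < A) (hμE : μ E = ENNReal.ofReal A) {s : Set α} {F : α → ℝ}
    (hF : AEStronglyMeasurable F (ν.restrict s)) (hF0 : 0 ≤ᵐ[ν.restrict s] F)
    (hEB : μ (E ∩ B) = ∫⁻ x in s, ENNReal.ofReal (F x) ∂ν) :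
    μ[B | E] = ENNReal.ofReal (∫ x in s, 1 / A * F x ∂ν) := by
  have hF_int : IntegrableOn F s ν :=
    ⟨hF, (hasFiniteIntegral_iff_ofReal hF0).2 (hEB ▸ measure_lt_top _ _)⟩
  rw [cond_apply hE, hμE, hEB, integral_const_mul, ENNReal.ofReal_mul (by positivity),
    ofReal_integral_eq_lintegral_ofReal hF_int hF0, one_div, ENNReal.ofReal_inv_of_pos hA]

theorem stmt14_general (lamT lamm Rm ε k αT αm : ℝ)
    (hlamm : 0 < lamm) (hRm : 0 < Rm) (hε : 0 < ε)
    (hk : 0 < k) (hαT : 0 < αT) (hαm : 0 < αm)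
    (W : ℝ → ℝ)
    (hW' : ∀ u : ℝ, 0 ≤ u → 0 ≤ W u ∧ W u * Real.exp (W u) = u)
    (Ω : Type*) [MeasureSpace Ω] [IsProbabilityMeasure (ℙ : Measure Ω)]
    (XT Xm : Ω → ℝ) (hXT : Measurable XT) (hXm : Measurable Xm)
    (hindep : IndepFun XT Xm)
    (fxm : ℝ → ℝ)
    (hf : ∀ x, fxm x = 2 * π * lamm * x * Real.exp (-(π * lamm * x ^ 2)) /
      (1 - Real.exp (-(π * lamm * Rm ^ 2))))
    (hXmlaw : Measure.map Xm ℙ = (volume : Measure ℝ).withDensity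
      (Set.indicator (Set.Ioo 0 Rm) (fun x => ENNReal.ofReal (fxm x))))
    (hXTtail : ∀ ρ : ℝ, 0 ≤ ρ → ℙ {ω | ρ < XT ω} = ENNReal.ofReal (Real.exp (-(π * lamT * ρ ^ 2))))
    (ν : ℝ → ℝ)
    (hν : ∀ x, ν x = (αT / k) * W ((k / αT) * (x ^ αm / ε) ^ (1 / αT)))
    (AT Am : ℝ)
    (hAT : AT = (ℙ {ω | (ε * XT ω ^ αT * Real.exp (k * XT ω)) ^ (1 / αm) < Xm ω}).toReal)
    (hAm : Am = 1 - AT) (hAmpos : 0 < Am) :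
    ∀ xh ∈ Set.Ioo 0 Rm,
      (ℙ[|{ω | Xm ω ≤ (ε * XT ω ^ αT * Real.exp (k * XT ω)) ^ (1 / αm)}]) {ω | Xm ω ≤ xh} =
        ENNReal.ofReal (∫ x in Set.Ioo 0 xh,
          (1 / Am) * fxm x * Real.exp (-(π * lamT * ν x ^ 2))) := by
  rintro xh ⟨-, hxhR⟩
  obtain rfl : ν = lambertThreshold W ε k αT αm := funext hν
  set g := mmWaveCutoff ε k αT αm
  have hsec : ∀ x ∈ Ioo 0 xh, (ℙ : Measure Ω).map XT {t | x ≤ g t} =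
      ENNReal.ofReal (exp (-(π * lamT * lambertThreshold W ε k αT αm x ^ 2))) := fun x hx =>
    have := Measure.isProbabilityMeasure_map (μ := ℙ) hXT.aemeasurable
    measure_le_comp_eq_exp_of_measure_Ioi
      (fun ρ hρ => (Measure.map_apply hXT measurableSet_Ioi).trans (hXTtail ρ hρ))
      (mmWaveCutoff_strictMonoOn hε hk.le hαT hαm) (lambertThreshold_pos hW' hε hk hαT hx.1)
      (mmWaveCutoff_lambertThreshold hW' hε hk hαT hαm hx.1.le)
  have hfxm_meas : Measurable fxm := by rw [funext hf]; fun_prop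
  set E := {ω | Xm ω ≤ g (XT ω)}
  have hE_meas : MeasurableSet E := measurableSet_le hXm (measurable_mmWaveCutoff.comp hXT)
  have hE : ℙ E = ENNReal.ofReal Am := by
    have hEc : Eᶜ = {ω | g (XT ω) < Xm ω} := by ext; simp [E]
    rw [hAm, hAT, measure_eq_ofReal_one_sub_compl hE_meas, hEc]
    rfl
  have hjoint : ℙ (E ∩ {ω | Xm ω ≤ xh}) = ∫⁻ x in Ioo 0 xh,
      ENNReal.ofReal (fxm x * exp (-(π * lamT * lambertThreshold W ε k αT αm x ^ 2))) := by
    rw [hindep.measure_le_comp_inter_le_eq_setLIntegral hXT hXm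
      (hfxm_meas.ennreal_ofReal.indicator measurableSet_Ioo) hXmlaw measurable_mmWaveCutoff xh,
      setLIntegral_Iic_indicator_Ioo hxhR]
    refine setLIntegral_congr_fun measurableSet_Ioo fun x hx => ?_
    rw [hsec x hx, ENNReal.ofReal_mul' (exp_pos _).le]
  have hθ : AEMeasurable (lambertThreshold W ε k αT αm) (volume.restrict (Ioo 0 xh)) :=
    aemeasurable_restrict_of_monotoneOn measurableSet_Ioo
      ((monotoneOn_lambertThreshold hW' hε hk hαT hαm).mono Ioo_subset_Ioi_self)
  simp only [mul_assoc (1 / Am)]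
  refine cond_eq_ofReal_setIntegral hE_meas hAmpos hE (by fun_prop) ?_ hjoint
  filter_upwards [ae_restrict_mem measurableSet_Ioo] with x hx
  have hx0 : 0 < x := hx.1
  have : exp (-(π * lamm * Rm ^ 2)) < 1 := exp_lt_one_iff.2 (neg_neg_of_pos (by positivity))
  rw [hf x]
  exact mul_nonneg (div_nonneg (by positivity) (by linarith)) (exp_pos _).le

/-- Conditioned on association with the mmWave tier, the serving-distance density is
`f_{X_m}(xh) = (1/A_m) f_{x_m}(xh) e^{−π λ_T ν(xh)²}`, where
`ν(xh) = (α_T/k) W((k/α_T)(xh^{α_m}/ε)^{1/α_T})`, `W` is the Lambert W function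
(the inverse of `w ↦ w e^w` on `[0,∞)`), and `A_m = 1 − A_T` with `A_T` the THz
association probability: the conditional CDF of the serving distance given the
mmWave-association event is the integral of this density. -/
theorem stmt14 (lamT lamm Rm ε k αT αm : ℝ)
    (hlamT : 0 < lamT) (hlamm : 0 < lamm) (hRm : 0 < Rm) (hε : 0 < ε)
    (hk : 0 < k) (hαT : 0 < αT) (hαm : 0 < αm)
    (W : ℝ → ℝ)
    (hW : ∀ w : ℝ, 0 ≤ w → W (w * Real.exp w) = w)
    (hW' : ∀ u : ℝ, 0 ≤ u → 0 ≤ W u ∧ W u * Real.exp (W u) = u)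
    (Ω : Type*) [MeasureSpace Ω] [IsProbabilityMeasure (ℙ : Measure Ω)]
    (XT Xm : Ω → ℝ) (hXT : Measurable XT) (hXm : Measurable Xm)
    (hindep : IndepFun XT Xm)
    (fxm : ℝ → ℝ)
    (hf : ∀ x, fxm x = 2 * π * lamm * x * Real.exp (-(π * lamm * x ^ 2)) /
      (1 - Real.exp (-(π * lamm * Rm ^ 2))))
    (hXmlaw : Measure.map Xm ℙ = (volume : Measure ℝ).withDensity
      (Set.indicator (Set.Ioo 0 Rm) (fun x => ENNReal.ofReal (fxm x))))
    (hXTtail : ∀ ρ : ℝ, 0 ≤ ρ → ℙ {ω | ρ < XT ω} = ENNReal.ofReal (Real.exp (-(π * lamT * ρ ^ 2))))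
    (ν : ℝ → ℝ)
    (hν : ∀ x, ν x = (αT / k) * W ((k / αT) * (x ^ αm / ε) ^ (1 / αT)))
    (AT Am : ℝ)
    (hAT : AT = (ℙ {ω | (ε * XT ω ^ αT * Real.exp (k * XT ω)) ^ (1 / αm) < Xm ω}).toReal)
    (hAm : Am = 1 - AT) (hAmpos : 0 < Am) :
    ∀ xh ∈ Set.Ioo 0 Rm,
      (ℙ[|{ω | Xm ω ≤ (ε * XT ω ^ αT * Real.exp (k * XT ω)) ^ (1 / αm)}]) {ω | Xm ω ≤ xh} =
        ENNReal.ofReal (∫ x in Set.Ioo 0 xh,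
          (1 / Am) * fxm x * Real.exp (-(π * lamT * ν x ^ 2))) :=
  stmt14_general lamT lamm Rm ε k αT αm hlamm hRm hε hk hαT hαm W hW' Ω XT Xm hXT hXm hindep fxm hf
    hXmlaw hXTtail ν hν AT Am hAT hAm hAmpos
end
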